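/- For any positive integer t and any graphs H1, H2 each with treewidth at most t, the strong product G := H1 ⊠ H2 has a 2-colouring in which every monochromatic component has at most 2·((t+1)·|V(G)|)^{2/3} vertices. -/

import Mathlib

open SimpleGraph

universe u v

/-- The strong product of two simple graphs. -/
def StrongProd {α : Type u} {β : Type v} (G : SimpleGraph α) (H : SimpleGraph β) :
    SimpleGraph (α × β) where
  Adj x y := (x.1 = y.1 ∧ H.Adj x.2 y.2) ∨ (x.2 = y.2 ∧ G.Adj x.1 y.1) ∨
    (G.Adj x.1 y.1 ∧ H.Adj x.2 y.2)
  symm := by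
    constructor
    rintro x y (⟨h1, h2⟩ | ⟨h1, h2⟩ | ⟨h1, h2⟩)
    · exact Or.inl ⟨h1.symm, h2.symm⟩
    · exact Or.inr (Or.inl ⟨h1.symm, h2.symm⟩)
    · exact Or.inr (Or.inr ⟨h1.symm, h2.symm⟩)
  loopless := by
    constructor
    rintro x (⟨h1, h2⟩ | ⟨h1, h2⟩ | ⟨h1, h2⟩)
    · exact h2.ne rfl
    · exact h2.ne rfl
    · exact h1.ne rfl

/-- The fan graph `F_n`: a path on `n` vertices (vertices `1,…,n`) together with
one dominant vertex (vertex `0`) adjacent to all path vertices. -/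
def Fan (n : ℕ) : SimpleGraph (Fin (n + 1)) :=
  SimpleGraph.fromRel (fun u v => u = 0 ∨ u.val + 1 = v.val)

/-- The cone over `m` disjoint copies of `G`: `m` pairwise disjoint copies of `G`
together with one new vertex adjacent to every vertex of every copy. -/
def GraphCone {V : Type u} (m : ℕ) (G : SimpleGraph V) :
    SimpleGraph (Option (Fin m × V)) where
  Adj x y :=
    match x, y with
    | none, none => False
    | none, some _ => True
    | some _, none => True
    | some (i, _u), some (j, _v) => i = j ∧ G.Adj _u _v
  symm := by
    constructor
    rintro (_ | ⟨i, u⟩) (_ | ⟨j, v⟩) h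
    · exact h
    · trivial
    · trivial
    · exact ⟨h.1.symm, h.2.symm⟩
  loopless := by
    constructor
    rintro (_ | ⟨i, u⟩) h
    · exact h
    · exact h.2.ne rfl

/-- `G` has a tree-decomposition of width at most `t`. -/
def TreewidthLE {V : Type u} (G : SimpleGraph V) (t : ℕ) : Prop :=
  ∃ (ι : Type) (T : SimpleGraph ι) (W : ι → Finset V),
    T.IsTree ∧
    (∀ ⦃u v : V⦄, G.Adj u v → ∃ x, u ∈ W x ∧ v ∈ W x) ∧
    (∀ v : V, (T.induce {x | v ∈ W x}).Connected) ∧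
    (∀ x, (W x).card ≤ t + 1)

/-- A set of vertices is monochromatic under a colouring `f`. -/
def IsMonochromatic {V : Type u} {c : ℕ} (f : V → Fin c) (S : Finset V) : Prop :=
  ∀ u ∈ S, ∀ v ∈ S, f u = f v

/-- Every monochromatic component of the colouring `f` of `G` has at most `k` vertices. -/
def ClusterLE {V : Type u} {c : ℕ} (G : SimpleGraph V) (f : V → Fin c) (k : ℕ) : Prop :=
  ∀ S : Finset V, IsMonochromatic f S → (G.induce (S : Set V)).Connected → S.card ≤ k

/-- Every monochromatic component of the colouring `f` of `G` has at most `b` vertices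
(real-valued bound). -/
def ClusterLEReal {V : Type u} {c : ℕ} (G : SimpleGraph V) (f : V → Fin c) (b : ℝ) : Prop :=
  ∀ S : Finset V, IsMonochromatic f S → (G.induce (S : Set V)).Connected → (S.card : ℝ) ≤ b

/-!
Let `nᵢ = |V(Hᵢ)|`, `n = n₁ n₂` and `m = ⌊((t+1) n)^{1/3}⌋`. Choose sets `Sᵢ` in `Hᵢ` with
`(m+1)|Sᵢ| ≤ (t+1) nᵢ` whose removal leaves components of at most `m` vertices. Colour the cross
`S₁ × V₂ ∪ V₁ × S₂` with one colour and the rest with the other. The cross has at most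
`|S₁| n₂ + n₁ |S₂| ≤ 2(t+1)n/(m+1) ≤ 2((t+1)n)^{2/3}` vertices, while a connected set off the cross
projects onto connected sets of `H₁ - S₁` and `H₂ - S₂`, so has at most `m² ≤ ((t+1)n)^{2/3}`.

The separator is built greedily: root the tree-decomposition at a bag and take a deepest node `x`
with more than `m` vertices all of whose bags lie below `x`. The bag of `x` cuts these off from
the rest in pieces of at most `m` vertices each, and we recurse on the remaining vertices.
-/

namespace SimpleGraph

variable {V W : Type*} {G : SimpleGraph V} {H : SimpleGraph W}

lemma Connected.forall_of_adj {s : Set V} (hs : (G.induce s).Connected) {P : V → Prop}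
    {a : V} (ha : a ∈ s) (hPa : P a) (hP : ∀ u ∈ s, ∀ v ∈ s, G.Adj u v → P u → P v) :
    ∀ v ∈ s, P v := by
  have key : ∀ (u v : s) (w : (G.induce s).Walk u v), P u → P v := by
    intro u v w
    induction w with
    | nil => exact id
    | cons h _ ih => exact fun hu => ih (hP _ (Subtype.prop _) _ (Subtype.prop _) h hu)
  intro v hv
  obtain ⟨w⟩ := hs.preconnected ⟨a, ha⟩ ⟨v, hv⟩
  exact key _ _ w hPa

lemma Connected.induce_image {f : V → W} (hf : ∀ u v, G.Adj u v → f u = f v ∨ H.Adj (f u) (f v))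
    {s : Set V} (hs : (G.induce s).Connected) : (H.induce (f '' s)).Connected := by
  let g : s → f '' s := fun v => ⟨f v, Set.mem_image_of_mem f v.2⟩
  have hg : Function.Surjective g := by
    rintro ⟨_, v, hv, rfl⟩
    exact ⟨⟨v, hv⟩, rfl⟩
  refine (connected_iff _).mpr ⟨fun u v => ?_, hs.nonempty.map g⟩
  obtain ⟨u, rfl⟩ := hg u
  obtain ⟨v, rfl⟩ := hg v
  rw [reachable_iff_reflTransGen]
  refine Relation.ReflTransGen.lift' g (fun a b hab => ?_) _ _
    ((reachable_iff_reflTransGen _ _).mp (hs.preconnected u v))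
  rcases hf a b hab with h | h
  · change Relation.ReflTransGen _ (g a) (g b)
    rw [show g b = g a from Subtype.ext h.symm]
  · exact .single h

variable {ι : Type*} {T : SimpleGraph ι}

/-- In a tree rooted at `r`: `x` is an ancestor of `y`. -/
def IsAncestor (T : SimpleGraph ι) (r x y : ι) : Prop := ∀ w : T.Walk r y, x ∈ w.support

lemma isAncestor_root (r y : ι) : T.IsAncestor r r y := fun w => w.start_mem_support

lemma IsAncestor.of_walk_avoiding {r x y z : ι} (hxy : T.IsAncestor r x y) (q : T.Walk y z)
    (hq : x ∉ q.support) : T.IsAncestor r x z := by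
  intro w
  by_contra hw
  have := hxy (w.append q.reverse)
  simp_all [Walk.mem_support_append_iff, Walk.support_reverse]

lemma IsAncestor.dist_add_dist_le (hT : T.Connected) {r x y : ι} (hxy : T.IsAncestor r x y) :
    T.dist r x + T.dist x y ≤ T.dist r y := by
  obtain ⟨w, hw⟩ := hT.exists_walk_length_eq_dist r y
  obtain ⟨p, q, rfl⟩ := Walk.mem_support_iff_exists_append.mp (hxy w)
  rw [← hw, Walk.length_append]
  exact add_le_add (dist_le p) (dist_le q)

lemma exists_adj_walk_avoiding {x y : ι} (w : T.Walk x y) (hne : x ≠ y) :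
    ∃ c, T.Adj x c ∧ ∃ q : T.Walk c y, x ∉ q.support ∧ q.support ⊆ w.support := by
  classical
  have hsub := w.support_bypass_subset_support
  have hpath := w.bypass_isPath
  cases h : w.bypass with
  | nil => exact absurd rfl hne
  | cons hxc q =>
    rw [h, Walk.cons_isPath_iff] at hpath
    rw [h, Walk.support_cons] at hsub
    exact ⟨_, hxc, q, hpath.2, fun z hz => hsub (List.mem_cons_of_mem _ hz)⟩

lemma IsAcyclic.eq_of_adj_of_walk_avoiding (hT : T.IsAcyclic) {x c₁ c₂ : ι}
    (h₁ : T.Adj x c₁) (h₂ : T.Adj x c₂) (w : T.Walk c₁ c₂) (hw : x ∉ w.support) : c₁ = c₂ := by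
  classical
  by_contra hne
  have hpath : (Walk.cons h₁.symm (Walk.cons h₂ Walk.nil) : T.Walk c₁ c₂).IsPath := by
    simp [Walk.cons_isPath_iff, h₁.ne', h₂.ne, hne]
  have hx : x ∈ (⟨_, w.bypass_isPath⟩ : T.Path c₁ c₂).1.support := by
    rw [← (hT.subsingleton_path c₁ c₂).elim ⟨_, hpath⟩ ⟨_, w.bypass_isPath⟩]
    simp
  exact hw (w.support_bypass_subset_support hx)

lemma IsAncestor.exists_child (hT : T.IsTree) {r x y : ι} (hxy : T.IsAncestor r x y)
    (hne : x ≠ y) : ∃ c, T.dist r x < T.dist r c ∧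
      ∀ z, (∃ q : T.Walk y z, x ∉ q.support) → T.IsAncestor r c z := by
  classical
  obtain ⟨w⟩ := hT.connected x y
  obtain ⟨c, hxc, q, hq, -⟩ := exists_adj_walk_avoiding w hne
  have hxc' : T.IsAncestor r x c := hxy.of_walk_avoiding q.reverse (by simpa using hq)
  refine ⟨c, ?_, ?_⟩
  · have := hxc'.dist_add_dist_le hT.connected
    have := hT.connected.pos_dist_of_ne hxc.ne
    omega
  rintro z ⟨q', hq'⟩ w'
  by_contra hcw
  have hxz : x ∈ w'.support := hxy.of_walk_avoiding q' hq' w'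
  have hzx : x ≠ z := fun h => hq' (h ▸ q'.end_mem_support)
  -- a walk from `r` to `z` avoiding `c` enters the branch of `z` at `x` through a second
  -- neighbour `c₁` of `x`, which `z` and `y` join to `c` away from `x`: a cycle
  obtain ⟨c₁, hxc₁, q₁, hq₁, hq₁w⟩ := exists_adj_walk_avoiding (w'.dropUntil x hxz) hzx
  have hc₁ : c₁ ≠ c := by
    rintro rfl
    exact hcw (w'.support_dropUntil_subset_support hxz (hq₁w q₁.start_mem_support))
  refine hc₁ (hT.isAcyclic.eq_of_adj_of_walk_avoiding hxc₁ hxc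
    (q₁.append (q.append q').reverse) ?_)
  simp [Walk.mem_support_append_iff, Walk.support_reverse, hq₁, hq, hq']

end SimpleGraph

structure IsTreeDecomposition {V ι : Type*} (G : SimpleGraph V) (T : SimpleGraph ι)
    (W : ι → Finset V) : Prop where
  isTree : T.IsTree
  adj_mem : ∀ ⦃u v : V⦄, G.Adj u v → ∃ x, u ∈ W x ∧ v ∈ W x
  connected : ∀ v : V, (T.induce {x | v ∈ W x}).Connected

def ComponentsLE {V : Type*} (G : SimpleGraph V) (U : Finset V) (m : ℕ) : Prop :=
  ∀ A ⊆ U, (G.induce (A : Set V)).Connected → A.card ≤ m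

open Classical in
noncomputable def verticesBelow {V ι : Type*} (T : SimpleGraph ι) (W : ι → Finset V) (r x : ι)
    (U : Finset V) : Finset V :=
  {v ∈ U | ∀ y, v ∈ W y → T.IsAncestor r x y}

lemma mem_verticesBelow {V ι : Type*} {T : SimpleGraph ι} {W : ι → Finset V} {r x : ι}
    {U : Finset V} {v : V} :
    v ∈ verticesBelow T W r x U ↔ v ∈ U ∧ ∀ y, v ∈ W y → T.IsAncestor r x y := by
  classical
  simp [verticesBelow]

namespace IsTreeDecomposition

variable {V ι : Type*} {G : SimpleGraph V} {T : SimpleGraph ι} {W : ι → Finset V}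

lemma exists_mem_bag (D : IsTreeDecomposition G T W) (v : V) : ∃ y, v ∈ W y :=
  let ⟨y⟩ := (D.connected v).nonempty
  ⟨y, y.2⟩

lemma exists_walk_avoiding (D : IsTreeDecomposition G T W) {v : V} {x y y' : ι}
    (hv : v ∉ W x) (hy : v ∈ W y) (hy' : v ∈ W y') : ∃ q : T.Walk y y', x ∉ q.support := by
  obtain ⟨w⟩ := (D.connected v).preconnected ⟨y, hy⟩ ⟨y', hy'⟩
  let q : T.Walk y y' := w.map (Embedding.induce _).toHom
  have hq : q.support = w.support.map Subtype.val := Walk.support_map _ _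
  refine ⟨q, ?_⟩
  rw [hq, List.mem_map]
  rintro ⟨⟨z, hz⟩, -, rfl⟩
  exact hv hz

lemma exists_walk_avoiding_of_connected (D : IsTreeDecomposition G T W) {A : Set V} {x : ι}
    (hA : ∀ a ∈ A, a ∉ W x) (hconn : (G.induce A).Connected) {a b : V} (ha : a ∈ A)
    (hb : b ∈ A) {y y' : ι} (hy : a ∈ W y) (hy' : b ∈ W y') :
    ∃ q : T.Walk y y', x ∉ q.support := by
  refine hconn.forall_of_adj (P := fun v => ∀ y', v ∈ W y' → ∃ q : T.Walk y y', x ∉ q.support)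
    ha (fun _ => D.exists_walk_avoiding (hA a ha) hy) ?_ b hb y' hy'
  intro u _ v hv huv hu y' hy'
  obtain ⟨z, hzu, hzv⟩ := D.adj_mem huv
  obtain ⟨q₁, hq₁⟩ := hu z hzu
  obtain ⟨q₂, hq₂⟩ := D.exists_walk_avoiding (hA v hv) hzv hy'
  exact ⟨q₁.append q₂, by simp [Walk.mem_support_append_iff, hq₁, hq₂]⟩

lemma isAncestor_of_adj (D : IsTreeDecomposition G T W) {r x : ι} {U : Finset V} {u v : V}
    (hu : u ∈ verticesBelow T W r x U) (hv : v ∉ W x) (huv : G.Adj u v) {y : ι} (hy : v ∈ W y) :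
    T.IsAncestor r x y := by
  obtain ⟨z, hzu, hzv⟩ := D.adj_mem huv
  obtain ⟨q, hq⟩ := D.exists_walk_avoiding hv hzv hy
  exact ((mem_verticesBelow.mp hu).2 z hzu).of_walk_avoiding q hq

lemma exists_child_verticesBelow [DecidableEq V] (D : IsTreeDecomposition G T W) {r x : ι}
    {U A : Finset V} (hAU : A ⊆ verticesBelow T W r x U \ W x)
    (hconn : (G.induce (A : Set V)).Connected) :
    ∃ c, T.dist r x < T.dist r c ∧ A ⊆ verticesBelow T W r c U := by
  obtain ⟨⟨a, ha⟩⟩ := hconn.nonempty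
  have hA : ∀ v ∈ A, v ∈ verticesBelow T W r x U ∧ v ∉ W x := fun v hv =>
    Finset.mem_sdiff.mp (hAU hv)
  obtain ⟨y, hy⟩ := D.exists_mem_bag a
  have hxy : x ≠ y := by
    rintro rfl
    exact (hA a ha).2 hy
  obtain ⟨c, hc, hbelow⟩ := ((mem_verticesBelow.mp (hA a ha).1).2 y hy).exists_child D.isTree hxy
  refine ⟨c, hc, fun v hv => mem_verticesBelow.mpr ⟨(mem_verticesBelow.mp (hA v hv).1).1,
    fun y' hy' => hbelow y' ?_⟩⟩
  exact D.exists_walk_avoiding_of_connected (fun v hv => (hA v hv).2) hconn ha hv hy hy'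

/-- `X` is `verticesBelow` a deepest node `x` for which it has more than `m` elements; each branch
at `x` then carries at most `m` of them. -/
lemma exists_cut [DecidableEq V] (D : IsTreeDecomposition G T W) {U : Finset V} {m : ℕ}
    (hU : m < U.card) :
    ∃ (x : ι) (X : Finset V), X ⊆ U ∧ m < X.card ∧ ComponentsLE G (X \ W x) m ∧
      ∀ u ∈ X \ W x, ∀ v ∈ U, G.Adj u v → v ∈ X ∪ W x := by
  choose bag hbag using D.exists_mem_bag
  obtain ⟨a, -⟩ := Finset.card_pos.mp (Nat.zero_lt_of_lt hU)
  set r := bag a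
  let IsLarge : ι → Prop := fun x => m < (verticesBelow T W r x U).card
  have hr : IsLarge r := by
    simpa [IsLarge, verticesBelow, isAncestor_root] using hU
  have hdepth : ∀ x, IsLarge x → T.dist r x ≤ U.sup fun v => T.dist r (bag v) := by
    intro x hx
    obtain ⟨v, hv⟩ := Finset.card_pos.mp (Nat.zero_lt_of_lt hx)
    obtain ⟨hvU, hvx⟩ := mem_verticesBelow.mp hv
    calc T.dist r x ≤ T.dist r (bag v) :=
          le_of_add_le_left ((hvx _ (hbag v)).dist_add_dist_le D.isTree.connected)
      _ ≤ _ := Finset.le_sup (f := fun v => T.dist r (bag v)) hvU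
  obtain ⟨x, hx, hmax⟩ : ∃ x, IsLarge x ∧ ∀ c, IsLarge c → T.dist r c ≤ T.dist r x := by
    let depths : Set ℕ := {n | ∃ x, IsLarge x ∧ T.dist r x = n}
    have hbdd : BddAbove depths := ⟨_, by rintro _ ⟨x, hx, rfl⟩; exact hdepth x hx⟩
    obtain ⟨x, hx, hxd⟩ := Nat.sSup_mem (⟨_, r, hr, rfl⟩ : depths.Nonempty) hbdd
    exact ⟨x, hx, fun c hc => hxd ▸ le_csSup hbdd ⟨c, hc, rfl⟩⟩
  refine ⟨x, _, fun v hv => (mem_verticesBelow.mp hv).1, hx, fun A hA hconn => ?_, ?_⟩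
  · obtain ⟨c, hxc, hAc⟩ := D.exists_child_verticesBelow hA hconn
    have hc : ¬ IsLarge c := fun hc => (hmax c hc).not_gt hxc
    exact (Finset.card_le_card hAc).trans (not_lt.mp hc)
  · intro u hu v hvU huv
    by_cases hv : v ∈ W x
    · exact Finset.mem_union_right _ hv
    · exact Finset.mem_union_left _ (mem_verticesBelow.mpr
        ⟨hvU, fun y hy => D.isAncestor_of_adj (Finset.mem_sdiff.mp hu).1 hv huv hy⟩)

lemma exists_separator [DecidableEq V] (D : IsTreeDecomposition G T W) {t : ℕ}
    (hW : ∀ x, (W x).card ≤ t + 1) (m : ℕ) (U : Finset V) :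
    ∃ S : Finset V, (m + 1) * S.card ≤ (t + 1) * U.card ∧ ComponentsLE G (U \ S) m := by
  induction U using Finset.strongInduction with
  | H U ih =>
  by_cases hU : U.card ≤ m
  · exact ⟨∅, by simp, fun A hA _ => (Finset.card_le_card (hA.trans Finset.sdiff_subset)).trans hU⟩
  obtain ⟨x, X, hXU, hX, hcomp, hclosed⟩ := D.exists_cut (not_le.mp hU)
  obtain ⟨S, hS, hcompS⟩ := ih (U \ X) (Finset.sdiff_ssubset hXU (Finset.card_pos.mp (by omega)))
  refine ⟨W x ∪ S, ?_, fun A hA hconn => ?_⟩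
  · have hUX : (U \ X).card + X.card = U.card := Finset.card_sdiff_add_card_eq_card hXU
    calc (m + 1) * (W x ∪ S).card ≤ (m + 1) * (t + 1) + (t + 1) * (U \ X).card := by
          grw [Finset.card_union_le, hW x, mul_add, hS]
      _ ≤ (t + 1) * U.card := by rw [mul_comm, ← mul_add]; gcongr; omega
  have hAU : ∀ v ∈ A, v ∈ U ∧ v ∉ W x ∧ v ∉ S := fun v hv => by
    simpa [not_or, and_assoc] using hA hv
  by_cases hAX : ∃ a ∈ A, a ∈ X
  · obtain ⟨a, ha, haX⟩ := hAX
    have hAX : ∀ v ∈ A, v ∈ X := by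
      refine hconn.forall_of_adj (P := (· ∈ X)) ha haX fun u hu v hv huv huX => ?_
      have := hclosed u (Finset.mem_sdiff.mpr ⟨huX, (hAU u hu).2.1⟩) v (hAU v hv).1 huv
      simpa [(hAU v hv).2.1] using this
    exact hcomp A (fun v hv => Finset.mem_sdiff.mpr ⟨hAX v hv, (hAU v hv).2.1⟩) hconn
  · simp only [not_exists, not_and] at hAX
    exact hcompS A (fun v hv => by simp [hAU v hv, hAX v hv]) hconn

end IsTreeDecomposition

lemma TreewidthLE.exists_separator {V : Type*} [DecidableEq V] {G : SimpleGraph V} {t : ℕ}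
    (h : TreewidthLE G t) (m : ℕ) (U : Finset V) :
    ∃ S : Finset V, (m + 1) * S.card ≤ (t + 1) * U.card ∧ ComponentsLE G (U \ S) m :=
  let ⟨_, _, _, hT, hE, hC, hW⟩ := h
  IsTreeDecomposition.exists_separator ⟨hT, hE, hC⟩ hW m U

section StrongProduct

variable {V₁ V₂ : Type*} {H₁ : SimpleGraph V₁} {H₂ : SimpleGraph V₂}

lemma StrongProd.fst_eq_or_adj {p q : V₁ × V₂} (h : (StrongProd H₁ H₂).Adj p q) :
    p.1 = q.1 ∨ H₁.Adj p.1 q.1 := by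
  rcases h with ⟨h, -⟩ | ⟨-, h⟩ | ⟨h, -⟩ <;> tauto

lemma StrongProd.snd_eq_or_adj {p q : V₁ × V₂} (h : (StrongProd H₁ H₂).Adj p q) :
    p.2 = q.2 ∨ H₂.Adj p.2 q.2 := by
  rcases h with ⟨-, h⟩ | ⟨h, -⟩ | ⟨-, h⟩ <;> tauto

def crossColouring [DecidableEq V₁] [DecidableEq V₂] (S₁ : Finset V₁) (S₂ : Finset V₂) :
    V₁ × V₂ → Fin 2 :=
  fun p => if p.1 ∈ S₁ ∨ p.2 ∈ S₂ then 0 else 1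

variable [Fintype V₁] [Fintype V₂] [DecidableEq V₁] [DecidableEq V₂]

lemma clusterLE_crossColouring {S₁ : Finset V₁} {S₂ : Finset V₂} {m : ℕ}
    (h₁ : ComponentsLE H₁ (Finset.univ \ S₁) m) (h₂ : ComponentsLE H₂ (Finset.univ \ S₂) m) :
    ClusterLE (StrongProd H₁ H₂) (crossColouring S₁ S₂)
      (max (S₁.card * Fintype.card V₂ + Fintype.card V₁ * S₂.card) (m * m)) := by
  intro A hmono hconn
  obtain ⟨⟨a, ha⟩⟩ := hconn.nonempty
  have hcross : ∀ p ∈ A, (p.1 ∈ S₁ ∨ p.2 ∈ S₂ ↔ a.1 ∈ S₁ ∨ a.2 ∈ S₂) := fun p hp => by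
    have := hmono p hp a ha
    unfold crossColouring at this
    split_ifs at this <;> simp_all
  by_cases hacross : a.1 ∈ S₁ ∨ a.2 ∈ S₂
  · refine le_max_of_le_left ?_
    have hsub : A ⊆ S₁ ×ˢ Finset.univ ∪ Finset.univ ×ˢ S₂ := fun p hp => by
      simpa using (hcross p hp).mpr hacross
    grw [hsub, Finset.card_union_le]
    simp
  · refine le_max_of_le_right ?_
    have hproj : ∀ p ∈ A, p.1 ∉ S₁ ∧ p.2 ∉ S₂ := fun p hp => by
      simpa [not_or] using (hcross p hp).not.mpr hacross
    have hfst : (A.image Prod.fst).card ≤ m := by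
      refine h₁ _ (fun u hu => ?_) (by
        rw [Finset.coe_image]; exact hconn.induce_image fun _ _ h => StrongProd.fst_eq_or_adj h)
      obtain ⟨p, hp, rfl⟩ := Finset.mem_image.mp hu
      simpa using (hproj p hp).1
    have hsnd : (A.image Prod.snd).card ≤ m := by
      refine h₂ _ (fun u hu => ?_) (by
        rw [Finset.coe_image]; exact hconn.induce_image fun _ _ h => StrongProd.snd_eq_or_adj h)
      obtain ⟨p, hp, rfl⟩ := Finset.mem_image.mp hu
      simpa using (hproj p hp).2
    calc A.card ≤ (A.image Prod.fst ×ˢ A.image Prod.snd).card :=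
          Finset.card_le_card fun p hp => Finset.mem_product.mpr
            ⟨Finset.mem_image_of_mem _ hp, Finset.mem_image_of_mem _ hp⟩
      _ ≤ m * m := by rw [Finset.card_product]; exact Nat.mul_le_mul hfst hsnd

end StrongProduct

lemma natCast_le_two_mul_sq_of_floor {x : ℝ} {k : ℕ}
    (hk : ((⌊x⌋₊ : ℝ) + 1) * k ≤ 2 * x ^ 3) : (k : ℝ) ≤ 2 * x ^ 2 := by
  have := Nat.lt_floor_add_one x
  nlinarith [sq_nonneg x]

theorem two_colour_upper_general (t : ℕ) {V₁ V₂ : Type} [Fintype V₁] [Fintype V₂]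
    (H₁ : SimpleGraph V₁) (H₂ : SimpleGraph V₂)
    (h₁ : TreewidthLE H₁ t) (h₂ : TreewidthLE H₂ t) :
    ∃ f : V₁ × V₂ → Fin 2, ClusterLEReal (StrongProd H₁ H₂) f
      (2 * (((t : ℝ) + 1) * (Fintype.card (V₁ × V₂) : ℝ)) ^ ((2 : ℝ) / 3)) := by
  classical
  set y : ℝ := ((t : ℝ) + 1) * (Fintype.card (V₁ × V₂) : ℝ)
  have hy : 0 ≤ y := by positivity
  set x := y ^ ((1 : ℝ) / 3)
  have hx : 0 ≤ x := by positivity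
  have hxy : x ^ 3 = y := by rw [← Real.rpow_natCast, ← Real.rpow_mul hy]; norm_num
  have hyx : y ^ ((2 : ℝ) / 3) = x ^ 2 := by rw [← Real.rpow_natCast, ← Real.rpow_mul hy]; norm_num
  obtain ⟨S₁, hS₁, hc₁⟩ := h₁.exists_separator ⌊x⌋₊ Finset.univ
  obtain ⟨S₂, hS₂, hc₂⟩ := h₂.exists_separator ⌊x⌋₊ Finset.univ
  refine ⟨crossColouring S₁ S₂, fun A hmono hconn => ?_⟩
  rw [hyx]
  rcases le_max_iff.mp (clusterLE_crossColouring hc₁ hc₂ A hmono hconn) with hcross | hA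
  · refine natCast_le_two_mul_sq_of_floor ?_
    rw [Finset.card_univ] at hS₁ hS₂
    have hmul : (⌊x⌋₊ + 1) * A.card ≤ 2 * ((t + 1) * Fintype.card (V₁ × V₂)) := by
      rw [Fintype.card_prod]
      nlinarith [Nat.mul_le_mul_right (Fintype.card V₂) hS₁,
        Nat.mul_le_mul_left (Fintype.card V₁) hS₂]
    rw [hxy, show y = ((t + 1) * Fintype.card (V₁ × V₂) : ℕ) by push_cast; rfl]
    exact_mod_cast hmul
  · have hfloor : (⌊x⌋₊ : ℝ) ≤ x := Nat.floor_le hx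
    calc (A.card : ℝ) ≤ ⌊x⌋₊ * ⌊x⌋₊ := by exact_mod_cast hA
      _ ≤ 2 * x ^ 2 := by nlinarith

/-- For graphs `H₁, H₂` of treewidth at most `t`, the strong product has a 2-colouring
with every monochromatic component of size at most `2((t+1)·|V|)^{2/3}`. -/
theorem two_colour_upper (t : ℕ) (ht : 0 < t) {V₁ V₂ : Type} [Fintype V₁] [Fintype V₂]
    (H₁ : SimpleGraph V₁) (H₂ : SimpleGraph V₂)
    (h₁ : TreewidthLE H₁ t) (h₂ : TreewidthLE H₂ t) :
    ∃ f : V₁ × V₂ → Fin 2, ClusterLEReal (StrongProd H₁ H₂) f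
      (2 * (((t : ℝ) + 1) * (Fintype.card (V₁ × V₂) : ℝ)) ^ ((2 : ℝ) / 3)) :=
  two_colour_upper_general t H₁ H₂ h₁ h₂
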